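/- arXiv:2311.17125 — 2 statements merged into one kernel-verified Lean document; each statement's English description precedes it below -/
import Mathlib

section
/- For every a ≥ 0, every ε > 0 and every q > 1, one has (1 + a)^q ≤ (1 + ε) a^q + (1 - (1 + ε)^(-1/(q-1)))^(1-q). -/
open Real

theorem elementary_power_ineq (a ε q : ℝ) (ha : 0 ≤ a) (hε : 0 < ε) (hq : 1 < q) :
    (1 + a) ^ q ≤ (1 + ε) * a ^ q + (1 - (1 + ε) ^ (-(1/(q - 1)))) ^ (1 - q) := by
  set l : ℝ := (1 + ε) ^ (-(1/(q - 1))) with hl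
  have hq1 : (0:ℝ) < q - 1 := by linarith
  have h1ε : (1:ℝ) < 1 + ε := by linarith
  have hε0 : (0:ℝ) ≤ 1 + ε := by linarith
  have hl0 : 0 < l := Real.rpow_pos_of_pos (by linarith) _
  have hl1 : l < 1 := by
    rw [hl]
    calc (1+ε) ^ (-(1/(q-1))) < (1+ε) ^ (0:ℝ) := by
          apply Real.rpow_lt_rpow_of_exponent_lt h1ε
          have : 0 < 1/(q-1) := by positivity
          linarith
      _ = 1 := Real.rpow_zero _
  have hlq : l ^ (1 - q) = 1 + ε := by
    rw [hl, ← Real.rpow_mul hε0]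
    have : -(1/(q-1)) * (1 - q) = 1 := by field_simp; ring
    rw [this, Real.rpow_one]
  have hmem1 : a / l ∈ Set.Ici (0:ℝ) := Set.mem_Ici.2 (by positivity)
  have h1l : (0:ℝ) < 1 - l := by linarith
  have hmem2 : 1 / (1 - l) ∈ Set.Ici (0:ℝ) := Set.mem_Ici.2 (by positivity)
  have hcv := (convexOn_rpow hq.le).2 hmem1 hmem2 hl0.le
    (by linarith : (0:ℝ) ≤ 1 - l) (by ring)
  simp only [smul_eq_mul] at hcv
  rw [mul_div_cancel₀ a hl0.ne', mul_one_div_cancel h1l.ne'] at hcv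
  have e1 : l * (a / l) ^ q = (1 + ε) * a ^ q := by
    rw [Real.div_rpow ha hl0.le, ← hlq, Real.rpow_sub hl0, Real.rpow_one]
    field_simp
  have e2 : (1 - l) * (1 / (1 - l)) ^ q = (1 - l) ^ (1 - q) := by
    rw [Real.div_rpow zero_le_one h1l.le, Real.one_rpow,
      Real.rpow_sub h1l, Real.rpow_one]
    field_simp
  rw [e1, e2] at hcv
  rwa [add_comm a 1] at hcv
end

section
/- Let N ≥ 3 and for n ≥ 8 set I₁(n) = ∫₀^{n^{-1/N}} r^{N(1-β)-1} (log(e/r))^{β(N/2-1)} dr, where β ∈ (0,1). Then I₁(n) · (log(e · n^{1/N})) → 0 as n → ∞ after multiplying by the normalizing factor (log(e·n^{1/N}))^{-(1-β) - N(γ-1)/(2γ)} with γ = N/((N-2)(1-β)); i.e. the quantity (log(e·n^{1/N}))^{-(1-β) - N(γ-1)/(2γ)} · I₁(n) = o(1/ log(e·n^{1/N})) as n → ∞. -/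
open Real Filter MeasureTheory

set_option maxHeartbeats 1600000 in
theorem inner_region_estimate (N : ℕ) (hN : 3 ≤ N) (β : ℝ) (hβ : β ∈ Set.Ioo (0:ℝ) 1)
    (γ : ℝ) (hγ : γ = N / ((N - 2) * (1 - β))) :
    Tendsto (fun n : ℕ =>
      (Real.log (Real.exp 1 * (n:ℝ) ^ ((1:ℝ)/N))) ^ (-(1 - β) - N * (γ - 1) / (2 * γ)) *
        (∫ r in (0:ℝ)..((n:ℝ) ^ (-(1:ℝ)/N)),
          r ^ ((N:ℝ) * (1 - β) - 1) * (Real.log (Real.exp 1 / r)) ^ (β * ((N:ℝ)/2 - 1))) *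
        Real.log (Real.exp 1 * (n:ℝ) ^ ((1:ℝ)/N)))
      atTop (nhds 0) := by
  obtain ⟨hβ0, hβ1⟩ := hβ
  have hN3 : (3:ℝ) ≤ N := by exact_mod_cast hN
  have hNpos : (0:ℝ) < N := by linarith
  set a : ℝ := β * ((N:ℝ)/2 - 1) with ha_def
  have ha : 0 < a := mul_pos hβ0 (by linarith)
  set ε : ℝ := (N * (1 - β)) / (2 * (a + 1)) with hε_def
  have hε : 0 < ε := div_pos (mul_pos hNpos (by linarith)) (by linarith)
  set q : ℝ := (N:ℝ) * (1 - β) - 1 - a * ε with hq_def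
  have haε : a * ε < N * (1-β) / 2 := by
    rw [hε_def, mul_div_assoc']
    rw [div_lt_div_iff₀ (by linarith) (by norm_num)]
    nlinarith [mul_pos hNpos (show (0:ℝ) < 1 - β by linarith)]
  have hq1pos : 0 < q + 1 := by
    have h2 : 0 < N * (1-β) / 2 := div_pos (mul_pos hNpos (by linarith)) (by norm_num)
    simp only [hq_def]; linarith
  have hq1 : -1 < q := by linarith
  set C : ℝ := Real.exp 1 ^ (ε*a) / ε ^ a with hC_def
  have hC : 0 < C := div_pos (Real.rpow_pos_of_pos (Real.exp_pos 1) _)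
    (Real.rpow_pos_of_pos hε _)
  set c : ℝ := (1-β)/2 with hc_def
  have hc : 0 < c := div_pos (by linarith) (by norm_num)
  clear_value a ε q C c
  have hγ1 : 1 < γ := by
    rw [hγ, lt_div_iff₀ (by nlinarith)]
    nlinarith
  have hE : -(1 - β) - (N:ℝ) * (γ - 1) / (2 * γ) ≤ 0 := by
    have h1 : 0 ≤ (N:ℝ) * (γ - 1) / (2 * γ) :=
      div_nonneg (mul_nonneg hNpos.le (by linarith)) (by linarith)
    linarith
  have hgR : Tendsto (fun x : ℝ => x^(-c) * (1 + Real.log x / N)) atTop (nhds 0) := by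
    have t1 : Tendsto (fun x : ℝ => x^(-c)) atTop (nhds 0) := tendsto_rpow_neg_atTop hc
    have t2 : Tendsto (fun x : ℝ => Real.log x / x ^ c / N) atTop (nhds 0) := by
      have h := (isLittleO_log_rpow_atTop hc).tendsto_div_nhds_zero
      simpa using h.div_const (N:ℝ)
    have h := t1.add t2
    rw [add_zero] at h
    refine h.congr' ?_
    filter_upwards [eventually_gt_atTop (0:ℝ)] with x hx
    have hxc : x ^ c ≠ 0 := (Real.rpow_pos_of_pos hx c).ne'
    rw [Real.rpow_neg hx.le]
    field_simp
  have hg : Tendsto (fun n : ℕ => (C/(q+1)) * ((n:ℝ)^(-c) * (1 + Real.log n / N)))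
      atTop (nhds 0) := by
    have h := (hgR.comp tendsto_natCast_atTop_atTop).const_mul (C/(q+1))
    simpa using h
  rw [tendsto_zero_iff_norm_tendsto_zero]
  apply squeeze_zero' (Eventually.of_forall fun n => norm_nonneg _) ?_ hg
  filter_upwards [eventually_ge_atTop 1] with n hn
  have hn1 : (1:ℝ) ≤ (n:ℝ) := by exact_mod_cast hn
  have hn0 : (0:ℝ) < (n:ℝ) := by linarith
  set T : ℝ := (n:ℝ) ^ (-(1:ℝ)/N) with hT_def
  have hT0 : 0 < T := Real.rpow_pos_of_pos hn0 _
  have hT1 : T ≤ 1 := Real.rpow_le_one_of_one_le_of_nonpos hn1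
    (by rw [neg_div]; exact neg_nonpos.mpr (by positivity))
  clear_value T
  have hL : Real.log (Real.exp 1 * (n:ℝ) ^ ((1:ℝ)/N)) = 1 + Real.log n / N := by
    rw [Real.log_mul (Real.exp_pos 1).ne' (Real.rpow_pos_of_pos hn0 _).ne',
      Real.log_exp, Real.log_rpow hn0]
    ring
  have hlogn : 0 ≤ Real.log n := Real.log_nonneg hn1
  have hdivn : 0 ≤ Real.log n / N := by positivity
  have hL1 : (1:ℝ) ≤ 1 + Real.log n / N := by linarith
  have hX0 : (0:ℝ) ≤ 1 + Real.log n / N := by linarith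
  -- pointwise bound of the integrand
  have hbound : ∀ r ∈ Set.Ioc (0:ℝ) T,
      ‖r ^ ((N:ℝ) * (1 - β) - 1) * (Real.log (Real.exp 1 / r)) ^ a‖ ≤ C * r ^ q := by
    intro r hr
    obtain ⟨hr0, hrT⟩ := hr
    have hr1 : r ≤ 1 := hrT.trans hT1
    have hx : 0 < Real.exp 1 / r := div_pos (Real.exp_pos 1) hr0
    have hlog0 : 0 ≤ Real.log (Real.exp 1 / r) := by
      rw [Real.log_div (Real.exp_pos 1).ne' hr0.ne', Real.log_exp]
      have := Real.log_nonpos hr0.le hr1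
      linarith
    have hkey : Real.log (Real.exp 1 / r) ≤ (Real.exp 1 / r) ^ ε / ε := by
      have h1 : Real.log ((Real.exp 1 / r) ^ ε) ≤ (Real.exp 1 / r) ^ ε - 1 :=
        Real.log_le_sub_one_of_pos (Real.rpow_pos_of_pos hx ε)
      rw [Real.log_rpow hx] at h1
      rw [le_div_iff₀ hε, mul_comm]
      linarith
    have h2 : (Real.log (Real.exp 1 / r)) ^ a ≤ ((Real.exp 1 / r) ^ ε / ε) ^ a :=
      Real.rpow_le_rpow hlog0 hkey ha.le
    have h3 : ((Real.exp 1 / r) ^ ε / ε) ^ a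
        = Real.exp 1 ^ (ε*a) / ε ^ a * r ^ (-(ε*a)) := by
      rw [Real.div_rpow (Real.rpow_nonneg hx.le ε) hε.le, ← Real.rpow_mul hx.le,
        Real.div_rpow (Real.exp_pos 1).le hr0.le, Real.rpow_neg hr0.le]
      field_simp
    have hrp : (0:ℝ) ≤ r ^ ((N:ℝ) * (1 - β) - 1) := Real.rpow_nonneg hr0.le _
    have h4 : r ^ ((N:ℝ) * (1 - β) - 1) * (Real.log (Real.exp 1 / r)) ^ a
        ≤ r ^ ((N:ℝ) * (1 - β) - 1) * (Real.exp 1 ^ (ε*a) / ε ^ a * r ^ (-(ε*a))) := by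
      rw [← h3]
      exact mul_le_mul_of_nonneg_left h2 hrp
    have h5 : r ^ ((N:ℝ) * (1 - β) - 1) * (Real.exp 1 ^ (ε*a) / ε ^ a * r ^ (-(ε*a)))
        = C * r ^ q := by
      rw [hC_def, hq_def]
      have h6 : r ^ ((N:ℝ) * (1 - β) - 1 - a * ε)
          = r ^ ((N:ℝ) * (1 - β) - 1) * r ^ (-(ε*a)) := by
        rw [← Real.rpow_add hr0]; ring_nf
      rw [h6]; ring
    rw [norm_of_nonneg (mul_nonneg hrp (Real.rpow_nonneg hlog0 a))]
    exact h4.trans_eq h5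
  have hIntg : IntervalIntegrable (fun r : ℝ => C * r ^ q) volume 0 T :=
    (intervalIntegral.intervalIntegrable_rpow' hq1).const_mul C
  have hInorm : ‖∫ r in (0:ℝ)..T,
      r ^ ((N:ℝ) * (1 - β) - 1) * (Real.log (Real.exp 1 / r)) ^ a‖
      ≤ |∫ r in (0:ℝ)..T, C * r ^ q| := by
    apply intervalIntegral.norm_integral_le_abs_of_norm_le _ hIntg
    apply ae_restrict_of_forall_mem measurableSet_uIoc
    intro r hr
    rw [Set.uIoc_of_le hT0.le] at hr
    exact hbound r hr
  have hIval : ∫ r in (0:ℝ)..T, C * r ^ q = C * ((T ^ (q+1) - 0 ^ (q+1)) / (q+1)) := by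
    rw [intervalIntegral.integral_const_mul, integral_rpow (Or.inl hq1)]
  have hexp : (-1:ℝ)/N*(q+1) ≤ -c := by
    rw [div_mul_eq_mul_div, neg_one_mul, neg_div, neg_le_neg_iff, le_div_iff₀ hNpos]
    simp only [hc_def, hq_def]
    nlinarith
  have hTq : T ^ (q+1) ≤ (n:ℝ) ^ (-c) := by
    rw [hT_def, ← Real.rpow_mul hn0.le]
    exact Real.rpow_le_rpow_of_exponent_le hn1 hexp
  have h6 : ‖∫ r in (0:ℝ)..T,
      r ^ ((N:ℝ) * (1 - β) - 1) * (Real.log (Real.exp 1 / r)) ^ a‖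
      ≤ C/(q+1) * (n:ℝ)^(-c) := by
    refine hInorm.trans ?_
    rw [hIval, Real.zero_rpow hq1pos.ne']
    have hTq1 : (0:ℝ) ≤ T ^ (q+1) := Real.rpow_nonneg hT0.le _
    have hnn : 0 ≤ C * ((T ^ (q+1) - 0) / (q+1)) :=
      mul_nonneg hC.le (div_nonneg (by linarith) hq1pos.le)
    rw [abs_of_nonneg hnn]
    calc C * ((T ^ (q+1) - 0) / (q+1)) = C/(q+1) * T ^ (q+1) := by ring
      _ ≤ C/(q+1) * (n:ℝ)^(-c) :=
        mul_le_mul_of_nonneg_left hTq (le_of_lt (div_pos hC hq1pos))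
  -- final estimate
  rw [hL]
  have hXE : (0:ℝ) ≤ (1 + Real.log n / N) ^ (-(1 - β) - (N:ℝ) * (γ - 1) / (2 * γ)) :=
    Real.rpow_nonneg hX0 _
  have hXE1 : (1 + Real.log n / N) ^ (-(1 - β) - (N:ℝ) * (γ - 1) / (2 * γ)) ≤ 1 :=
    Real.rpow_le_one_of_one_le_of_nonpos hL1 hE
  rw [norm_mul, norm_mul, norm_of_nonneg hXE, norm_of_nonneg hX0]
  have step1 : (1 + Real.log n / N) ^ (-(1 - β) - (N:ℝ) * (γ - 1) / (2 * γ)) *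
      ‖∫ r in (0:ℝ)..T, r ^ ((N:ℝ) * (1 - β) - 1) * (Real.log (Real.exp 1 / r)) ^ a‖
      ≤ 1 * (C/(q+1) * (n:ℝ)^(-c)) :=
    mul_le_mul hXE1 h6 (norm_nonneg _) zero_le_one
  calc (1 + Real.log n / N) ^ (-(1 - β) - (N:ℝ) * (γ - 1) / (2 * γ)) *
      ‖∫ r in (0:ℝ)..T, r ^ ((N:ℝ) * (1 - β) - 1) * (Real.log (Real.exp 1 / r)) ^ a‖ *
      (1 + Real.log n / N)
      ≤ 1 * (C/(q+1) * (n:ℝ)^(-c)) * (1 + Real.log n / N) :=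
        mul_le_mul_of_nonneg_right step1 hX0
    _ = C/(q+1) * ((n:ℝ)^(-c) * (1 + Real.log n / N)) := by ring
end
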